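/- Let uv be a cut edge of a connected signed graph Γ which is non-pendant and not on any triangle, and let Γ' = α(Γ, uv). Then λ(Γ') ≥ λ(Γ). -/

import Mathlib

structure SignedGraph (n : ℕ) where
  sign : Fin n → Fin n → ℝ
  symm : ∀ i j, sign i j = sign j i
  loopless : ∀ i, sign i i = 0
  vals : ∀ i j, sign i j = 0 ∨ sign i j = 1 ∨ sign i j = -1

/-- The adjacency matrix of a signed graph. -/
def SignedGraph.adj {n : ℕ} (Γ : SignedGraph n) : Matrix (Fin n) (Fin n) ℝ :=
  Matrix.of Γ.sign

/-- The underlying simple graph of a signed graph. -/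
def SignedGraph.graph {n : ℕ} (Γ : SignedGraph n) : SimpleGraph (Fin n) where
  Adj i j := Γ.sign i j ≠ 0
  symm := ⟨fun i j (h : Γ.sign i j ≠ 0) => show Γ.sign j i ≠ 0 by rwa [Γ.symm j i]⟩
  loopless := ⟨fun i (h : Γ.sign i i ≠ 0) => h (Γ.loopless i)⟩

/-- `lam` is the index (largest eigenvalue) of the signed graph `Γ`. -/
def SignedGraph.IsIndex {n : ℕ} (Γ : SignedGraph n) (lam : ℝ) : Prop :=
  (∃ y : Fin n → ℝ, y ≠ 0 ∧ Γ.adj.mulVec y = lam • y) ∧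
  ∀ μ : ℝ, (∃ y : Fin n → ℝ, y ≠ 0 ∧ Γ.adj.mulVec y = μ • y) → μ ≤ lam

open Matrix in
lemma euclid_inner_eq {n : ℕ} (a b : EuclideanSpace ℝ (Fin n)) :
    (inner ℝ a b : ℝ) = (a : Fin n → ℝ) ⬝ᵥ (b : Fin n → ℝ) := by
  simp [PiLp.inner_apply, dotProduct, mul_comm]

open Matrix in
lemma rayleigh_bound {n : ℕ} (M : Matrix (Fin n) (Fin n) ℝ) (hM : M.IsHermitian) (lam' : ℝ)
    (hmax : ∀ μ : ℝ, (∃ z : Fin n → ℝ, z ≠ 0 ∧ M.mulVec z = μ • z) → μ ≤ lam')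
    (y : Fin n → ℝ) : y ⬝ᵥ M.mulVec y ≤ lam' * (y ⬝ᵥ y) := by
  classical
  set B := hM.eigenvectorBasis with hB
  have hev : ∀ i, M.mulVec (B i) = hM.eigenvalues i • (B i : Fin n → ℝ) := fun i =>
    hM.mulVec_eigenvectorBasis i
  have hle : ∀ i, hM.eigenvalues i ≤ lam' := by
    intro i
    refine hmax _ ⟨B i, ?_, hev i⟩
    intro h
    exact B.orthonormal.ne_zero i (by ext w; exact congrFun h w)
  set y' : EuclideanSpace ℝ (Fin n) := WithLp.toLp 2 y with hy'
  set c : Fin n → ℝ := fun i => (inner ℝ (B i) y' : ℝ) with hc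
  have hMsymm : Mᵀ = M := by
    have h2 := hM
    rw [Matrix.IsHermitian, conjTranspose] at h2
    rw [← conjTranspose_eq_transpose_of_trivial]; exact hM
  have hBiy : ∀ i, (B i : Fin n → ℝ) ⬝ᵥ (M.mulVec y) = hM.eigenvalues i * c i := by
    intro i
    have h1 : (B i : Fin n → ℝ) ᵥ* M = M *ᵥ (B i : Fin n → ℝ) := by
      conv_lhs => rw [← hMsymm]
      exact Matrix.vecMul_transpose M _
    rw [dotProduct_mulVec, h1, hev i, smul_dotProduct, smul_eq_mul]
    congr 1
    exact (euclid_inner_eq _ _).symm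
  have key1 : y ⬝ᵥ M.mulVec y = ∑ i, c i * (hM.eigenvalues i * c i) := by
    have hp := B.sum_inner_mul_inner y' (WithLp.toLp 2 (M.mulVec y : Fin n → ℝ) : EuclideanSpace ℝ (Fin n))
    rw [euclid_inner_eq] at hp
    rw [show y ⬝ᵥ M.mulVec y = ((y' : Fin n → ℝ) ⬝ᵥ (M.mulVec y)) from rfl, ← hp]
    apply Finset.sum_congr rfl
    intro i _
    have h2 : (inner ℝ (B i) (WithLp.toLp 2 (M.mulVec y : Fin n → ℝ) : EuclideanSpace ℝ (Fin n)) : ℝ)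
        = hM.eigenvalues i * c i := by
      rw [euclid_inner_eq]; exact hBiy i
    rw [h2, real_inner_comm]
  have key2 : y ⬝ᵥ y = ∑ i, c i * c i := by
    have hp := B.sum_inner_mul_inner y' y'
    rw [euclid_inner_eq] at hp
    rw [show y ⬝ᵥ y = ((y' : Fin n → ℝ) ⬝ᵥ (y' : Fin n → ℝ)) from rfl, ← hp]
    apply Finset.sum_congr rfl
    intro i _
    rw [real_inner_comm]
  rw [key1, key2, Finset.mul_sum]
  apply Finset.sum_le_sum
  intro i _
  have h3 : c i * (hM.eigenvalues i * c i) = hM.eigenvalues i * (c i * c i) := by ring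
  rw [h3]
  exact mul_le_mul_of_nonneg_right (hle i) (mul_self_nonneg _)

open Finset Matrix in
lemma sum_split_two {n : ℕ} {u v : Fin n} (huv : u ≠ v) (f : Fin n → ℝ) :
    ∑ w, f w = f u + f v + ∑ w ∈ (univ.erase u).erase v, f w := by
  have h1 : ∑ w ∈ univ.erase u, f w + f u = ∑ w, f w :=
    Finset.sum_erase_add _ _ (mem_univ u)
  have h2 : ∑ w ∈ (univ.erase u).erase v, f w + f v = ∑ w ∈ univ.erase u, f w :=
    Finset.sum_erase_add _ _ (mem_erase.mpr ⟨huv.symm, mem_univ v⟩)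
  linarith

open Finset Matrix in
lemma quad_split {n : ℕ} (M : Matrix (Fin n) (Fin n) ℝ) {u v : Fin n} (huv : u ≠ v)
    (hsymm : ∀ i j, M i j = M j i) (hu : M u u = 0) (hv : M v v = 0) (z : Fin n → ℝ) :
    z ⬝ᵥ M.mulVec z = 2 * (M u v * z u * z v)
      + 2 * (z u * ∑ j ∈ (univ.erase u).erase v, M u j * z j)
      + 2 * (z v * ∑ j ∈ (univ.erase u).erase v, M v j * z j)
      + ∑ i ∈ (univ.erase u).erase v, ∑ j ∈ (univ.erase u).erase v, z i * (M i j * z j) := by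
  set T := (univ.erase u).erase v with hT
  have hrow : ∀ i, (M.mulVec z) i = M i u * z u + M i v * z v + ∑ j ∈ T, M i j * z j := by
    intro i
    rw [Matrix.mulVec, dotProduct, sum_split_two huv (fun j => M i j * z j)]
  rw [dotProduct, sum_split_two huv (fun i => z i * (M.mulVec z) i)]
  simp only [hrow]
  rw [hu, hv, hsymm v u]
  have hsplit : ∑ i ∈ T, z i * (M i u * z u + M i v * z v + ∑ j ∈ T, M i j * z j)
      = (∑ i ∈ T, z i * (M i u * z u)) + (∑ i ∈ T, z i * (M i v * z v))
        + ∑ i ∈ T, z i * ∑ j ∈ T, M i j * z j := by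
    rw [← Finset.sum_add_distrib, ← Finset.sum_add_distrib]
    apply Finset.sum_congr rfl; intro i _; ring
  rw [hsplit]
  have e1 : ∑ i ∈ T, z i * (M i u * z u) = z u * ∑ j ∈ T, M u j * z j := by
    rw [Finset.mul_sum]; apply Finset.sum_congr rfl; intro i _; rw [hsymm u i]; ring
  have e2 : ∑ i ∈ T, z i * (M i v * z v) = z v * ∑ j ∈ T, M v j * z j := by
    rw [Finset.mul_sum]; apply Finset.sum_congr rfl; intro i _; rw [hsymm v i]; ring
  have e3 : ∑ i ∈ T, z i * ∑ j ∈ T, M i j * z j = ∑ i ∈ T, ∑ j ∈ T, z i * (M i j * z j) := by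
    apply Finset.sum_congr rfl; intro i _; rw [Finset.mul_sum]
  rw [e1, e2, e3]
  ring

/-- α-transform on a cut edge `uv` (non-pendant, on no triangle) of a connected signed
graph does not decrease the index. -/
theorem stmt_6 {n : ℕ} (Γ Γ' : SignedGraph n) (u v : Fin n) (huv : u ≠ v)
    (hconn : Γ.graph.Connected)
    (hadj : Γ.graph.Adj u v)
    (hcut : ¬ (Γ.graph.deleteEdges {s(u, v)}).Reachable u v)
    (hnonpendu : ∃ w, w ≠ v ∧ Γ.sign u w ≠ 0)
    (hnonpendv : ∃ w, w ≠ u ∧ Γ.sign v w ≠ 0)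
    (htri : ∀ w, Γ.sign u w = 0 ∨ Γ.sign v w = 0)
    (hmove : ∀ w, w ≠ u → w ≠ v →
      Γ'.sign u w = Γ.sign u w + Γ.sign v w ∧ Γ'.sign v w = 0)
    (huv' : Γ'.sign u v = Γ.sign u v)
    (hsame : ∀ i j, i ≠ u → i ≠ v → j ≠ u → j ≠ v → Γ'.sign i j = Γ.sign i j) :
    ∀ lam lam' : ℝ, Γ.IsIndex lam → Γ'.IsIndex lam' → lam ≤ lam' := by
  classical
  intro lam lam' hI hI'
  obtain ⟨⟨x, hx0, hxeig⟩, -⟩ := hI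
  obtain ⟨-, hmax'⟩ := hI'
  set T : Finset (Fin n) := (Finset.univ.erase u).erase v with hT
  have hmemT : ∀ {w : Fin n}, w ∈ T → w ≠ u ∧ w ≠ v := by
    intro w hw
    rw [hT, Finset.mem_erase, Finset.mem_erase] at hw
    exact ⟨hw.2.1, hw.1⟩
  set s : ℝ := Γ.sign u v with hs_def
  have hsne : s ≠ 0 := hadj
  have hs : s = 1 ∨ s = -1 := by
    rcases Γ.vals u v with h | h | h
    · exact absurd h hsne
    · exact Or.inl h
    · exact Or.inr h
  have habs_s : |s| = 1 := by rcases hs with h | h <;> rw [h] <;> norm_num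
  -- the v-side of the cut
  set S : Fin n → Prop := fun w => (Γ.graph.deleteEdges {s(u, v)}).Reachable v w with hS_def
  have hvS : S v := SimpleGraph.Reachable.refl v
  have huS : ¬ S u := fun h => hcut h.symm
  have hcross : ∀ i j, S i → ¬ S j → Γ.sign i j ≠ 0 → i = v ∧ j = u := by
    intro i j hi hj hnz
    by_cases hij : s(i, j) = s(u, v)
    · rw [Sym2.eq_iff] at hij
      rcases hij with ⟨hiu, hjv⟩ | ⟨hiv, hju⟩
      · exact absurd (hiu ▸ hi) huS
      · exact ⟨hiv, hju⟩
    · exfalso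
      have hadj' : (Γ.graph.deleteEdges {s(u, v)}).Adj i j := by
        rw [SimpleGraph.deleteEdges_adj]
        exact ⟨hnz, by simpa using hij⟩
      exact hj (hi.trans hadj'.reachable)
  have ha_supp : ∀ j, j ≠ u → j ≠ v → Γ.sign u j ≠ 0 → ¬ S j := by
    intro j hju hjv hnz hjS
    exact hjv (hcross j u hjS huS (by rw [Γ.symm]; exact hnz)).1
  have hb_supp : ∀ j, j ≠ u → Γ.sign v j ≠ 0 → S j := by
    intro j hju hnz
    by_contra hjS
    exact hju ((hcross v j hvS hjS hnz).2 ▸ rfl)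
  have hsame_side : ∀ i j, i ≠ v → j ≠ v → Γ.sign i j ≠ 0 → (S i ↔ S j) := by
    intro i j hiv hjv hnz
    constructor
    · intro hi
      by_contra hj
      exact hiv (hcross i j hi hj hnz).1
    · intro hj
      by_contra hi
      exact hjv (hcross j i hj hi (by rw [Γ.symm]; exact hnz)).1
  -- constants
  set Aval : ℝ := lam * x u - s * x v with hAval
  set Bval : ℝ := lam * x v - s * x u with hBval
  set m : ℝ := max |x u| |x v| with hm
  set m' : ℝ := min |x u| |x v| with hm'
  set du : ℝ := if 0 ≤ Aval then 1 else -1 with hdu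
  set ep : ℝ := du * (if 0 ≤ Bval then 1 else -1) with hep
  set dv : ℝ := du * (if 0 ≤ s then 1 else -1) with hdv
  have hdu2 : du * du = 1 := by rw [hdu]; split_ifs <;> norm_num
  have hep2 : ep * ep = 1 := by rw [hep, hdu]; split_ifs <;> norm_num
  have hduA : du * Aval = |Aval| := by
    rw [hdu]; split_ifs with h
    · rw [abs_of_nonneg h]; ring
    · rw [abs_of_neg (lt_of_not_ge h)]; ring
  have hepB : (du * ep) * Bval = |Bval| := by
    rw [hep, hdu]
    split_ifs with h h2 h2
    · rw [abs_of_nonneg h2]; ring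
    · rw [abs_of_neg (lt_of_not_ge h2)]; ring
    · rw [abs_of_nonneg h2]; ring
    · rw [abs_of_neg (lt_of_not_ge h2)]; ring
  have hsdd : s * (du * dv) = 1 := by
    have h5 : du * dv = (du * du) * (if 0 ≤ s then (1:ℝ) else -1) := by rw [hdv]; ring
    rw [h5, hdu2, one_mul]
    rcases hs with h | h <;> rw [h] <;> norm_num
  have hm0 : 0 ≤ m := le_trans (abs_nonneg _) (le_max_left _ _)
  have hmm' : m * m' = |x u| * |x v| := by
    rcases le_total |x u| |x v| with h | h
    · rw [hm, hm', max_eq_right h, min_eq_left h]; ring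
    · rw [hm, hm', max_eq_left h, min_eq_right h]
  have hmsq : m * m + m' * m' = x u * x u + x v * x v := by
    rcases le_total |x u| |x v| with h | h
    · rw [hm, hm', max_eq_right h, min_eq_left h]
      rw [← abs_mul_abs_self (x u), ← abs_mul_abs_self (x v)]; ring
    · rw [hm, hm', max_eq_left h, min_eq_right h]
      rw [← abs_mul_abs_self (x u), ← abs_mul_abs_self (x v)]
  -- the test vector
  set y : Fin n → ℝ := fun w =>
    if w = u then du * m else if w = v then dv * m' else if S w then ep * x w else x w with hy
  have hyu : y u = du * m := by rw [hy]; simp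
  have hyv : y v = dv * m' := by rw [hy]; simp [huv.symm]
  have hyT : ∀ w, w ≠ u → w ≠ v → y w = if S w then ep * x w else x w := by
    intro w h1 h2; rw [hy]; simp [h1, h2]
  -- eigen equation pieces
  have hmv : ∀ w, ∑ j, Γ.sign w j * x j = lam * x w := by
    intro w
    have h := congrFun hxeig w
    rw [Matrix.mulVec, dotProduct] at h
    simpa [SignedGraph.adj] using h
  have hSA : ∑ j ∈ T, Γ.sign u j * x j = Aval := by
    have h := hmv u
    rw [sum_split_two huv (fun j => Γ.sign u j * x j)] at h
    rw [Γ.loopless u, ← hs_def] at h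
    rw [hAval]; linarith
  have hSB : ∑ j ∈ T, Γ.sign v j * x j = Bval := by
    have h := hmv v
    rw [sum_split_two huv (fun j => Γ.sign v j * x j)] at h
    rw [Γ.loopless v, Γ.symm v u, ← hs_def] at h
    rw [hBval]; linarith
  -- quadratic forms
  have hadjA : ∀ i j, Γ.adj i j = Γ.sign i j := fun i j => rfl
  have hadjA' : ∀ i j, Γ'.adj i j = Γ'.sign i j := fun i j => rfl
  have hQx : dotProduct x (Γ.adj.mulVec x)
      = 2 * (s * x u * x v) + 2 * (x u * Aval) + 2 * (x v * Bval)
        + ∑ i ∈ T, ∑ j ∈ T, x i * (Γ.sign i j * x j) := by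
    rw [quad_split Γ.adj huv (fun i j => Γ.symm i j) (Γ.loopless u) (Γ.loopless v) x]
    simp only [hadjA]
    rw [← hT, hSA, hSB, ← hs_def]
  have hQy : dotProduct y (Γ'.adj.mulVec y)
      = 2 * (s * y u * y v) + 2 * (y u * (Aval + ep * Bval))
        + ∑ i ∈ T, ∑ j ∈ T, x i * (Γ.sign i j * x j) := by
    rw [quad_split Γ'.adj huv (fun i j => Γ'.symm i j) (Γ'.loopless u) (Γ'.loopless v) y]
    simp only [hadjA']
    rw [← hT]
    have hvrow : ∑ j ∈ T, Γ'.sign v j * y j = 0 := by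
      apply Finset.sum_eq_zero
      intro j hj
      rw [(hmove j (hmemT hj).1 (hmemT hj).2).2, zero_mul]
    have hurow : ∑ j ∈ T, Γ'.sign u j * y j = Aval + ep * Bval := by
      have hsp : ∀ j ∈ T, Γ'.sign u j * y j
          = Γ.sign u j * x j + ep * (Γ.sign v j * x j) := by
        intro j hj
        obtain ⟨hju, hjv⟩ := hmemT hj
        rw [(hmove j hju hjv).1, hyT j hju hjv]
        by_cases hja : Γ.sign u j = 0
        · by_cases hjb : Γ.sign v j = 0
          · rw [hja, hjb]; ring
          · rw [if_pos (hb_supp j hju hjb), hja]; ring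
        · have hjS : ¬ S j := ha_supp j hju hjv hja
          have hjb : Γ.sign v j = 0 := by
            rcases htri j with h | h
            · exact absurd h hja
            · exact h
          rw [if_neg hjS, hjb]; ring
      rw [Finset.sum_congr rfl hsp, Finset.sum_add_distrib, hSA, ← Finset.mul_sum, hSB]
    have hRR : ∑ i ∈ T, ∑ j ∈ T, y i * (Γ'.sign i j * y j)
        = ∑ i ∈ T, ∑ j ∈ T, x i * (Γ.sign i j * x j) := by
      apply Finset.sum_congr rfl
      intro i hi
      apply Finset.sum_congr rfl
      intro j hj
      obtain ⟨hiu, hiv⟩ := hmemT hi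
      obtain ⟨hju, hjv⟩ := hmemT hj
      rw [hsame i j hiu hiv hju hjv, hyT i hiu hiv, hyT j hju hjv]
      by_cases hz : Γ.sign i j = 0
      · rw [hz]; ring_nf
      · have hSij := hsame_side i j hiv hjv hz
        by_cases hSi : S i
        · rw [if_pos hSi, if_pos (hSij.mp hSi)]
          have : ep * x i * (Γ.sign i j * (ep * x j))
              = (ep * ep) * (x i * (Γ.sign i j * x j)) := by ring
          rw [this, hep2, one_mul]
        · rw [if_neg hSi, if_neg (fun h => hSi (hSij.mpr h))]
    rw [hvrow, hurow, hRR, huv']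
    ring
  -- comparison
  have hkey : dotProduct x (Γ.adj.mulVec x) ≤ dotProduct y (Γ'.adj.mulVec y) := by
    rw [hQx, hQy, hyu, hyv]
    have h1 : s * (du * m) * (dv * m') = m * m' := by
      have : s * (du * m) * (dv * m') = (s * (du * dv)) * (m * m') := by ring
      rw [this, hsdd, one_mul]
    have h2 : du * m * (Aval + ep * Bval) = |Aval| * m + |Bval| * m := by
      have : du * m * (Aval + ep * Bval)
          = (du * Aval) * m + ((du * ep) * Bval) * m := by ring
      rw [this, hduA, hepB]
    rw [h1, h2]
    have e1 : s * x u * x v ≤ m * m' := by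
      calc s * x u * x v ≤ |s * x u * x v| := le_abs_self _
        _ = |x u| * |x v| := by rw [abs_mul, abs_mul, habs_s, one_mul]
        _ = m * m' := hmm'.symm
    have e2 : x u * Aval ≤ |Aval| * m := by
      calc x u * Aval ≤ |x u * Aval| := le_abs_self _
        _ = |x u| * |Aval| := abs_mul _ _
        _ ≤ m * |Aval| := mul_le_mul_of_nonneg_right (le_max_left _ _) (abs_nonneg _)
        _ = |Aval| * m := mul_comm _ _
    have e3 : x v * Bval ≤ |Bval| * m := by
      calc x v * Bval ≤ |x v * Bval| := le_abs_self _
        _ = |x v| * |Bval| := abs_mul _ _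
        _ ≤ m * |Bval| := mul_le_mul_of_nonneg_right (le_max_right _ _) (abs_nonneg _)
        _ = |Bval| * m := mul_comm _ _
    linarith
  -- norms agree
  have hnorm : dotProduct y y = dotProduct x x := by
    rw [dotProduct, dotProduct,
      sum_split_two huv (fun w => y w * y w), sum_split_two huv (fun w => x w * x w)]
    have hTeq : ∑ w ∈ T, y w * y w = ∑ w ∈ T, x w * x w := by
      apply Finset.sum_congr rfl
      intro w hw
      obtain ⟨hwu, hwv⟩ := hmemT hw
      rw [hyT w hwu hwv]
      by_cases hSw : S w
      · rw [if_pos hSw]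
        have : ep * x w * (ep * x w) = (ep * ep) * (x w * x w) := by ring
        rw [this, hep2, one_mul]
      · rw [if_neg hSw]
    rw [← hT, hTeq, hyu, hyv]
    have : du * m * (du * m) + dv * m' * (dv * m')
        = (du * du) * (m * m) + ((du * du) * ((if 0 ≤ s then (1:ℝ) else -1) * (if 0 ≤ s then (1:ℝ) else -1))) * (m' * m') := by
      rw [hdv]; ring
    rw [this, hdu2]
    have h4 : ((if 0 ≤ s then (1:ℝ) else -1) * (if 0 ≤ s then (1:ℝ) else -1)) = 1 := by
      split_ifs <;> norm_num
    rw [h4]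
    simp only [one_mul]
    linarith [hmsq]
  -- eigenvalue inequality
  have hherm : Γ'.adj.IsHermitian := by
    rw [Matrix.IsHermitian]
    ext i j
    simp only [Matrix.conjTranspose_apply, star_trivial]
    exact Γ'.symm j i
  have hray := rayleigh_bound Γ'.adj hherm lam' hmax' y
  have hxQ : dotProduct x (Γ.adj.mulVec x) = lam * (dotProduct x x) := by
    rw [hxeig, dotProduct_smul, smul_eq_mul]
  have hxx : 0 < dotProduct x x := by
    have h0 : 0 ≤ dotProduct x x := Finset.sum_nonneg fun i _ => mul_self_nonneg (x i)
    rcases lt_or_eq_of_le h0 with h | h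
    · exact h
    · exact absurd (dotProduct_self_eq_zero.mp h.symm) hx0
  have hfinal : lam * (dotProduct x x) ≤ lam' * (dotProduct x x) := by
    calc lam * (dotProduct x x) = dotProduct x (Γ.adj.mulVec x) := hxQ.symm
      _ ≤ dotProduct y (Γ'.adj.mulVec y) := hkey
      _ ≤ lam' * (dotProduct y y) := hray
      _ = lam' * (dotProduct x x) := by rw [hnorm]
  exact le_of_mul_le_mul_right (by linarith) hxx
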